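/- Consider a finite MDP and let (g⋆, h⋆) be a solution of the modified Bellman equations with simultaneous maximizer π⋆. Run Anc-VI with coefficients λ_k ∈ [0,1) for k ≥ 1 and the convention λ_0 = 1, starting from V^0, where for each i ≥ 0, π_i is a greedy policy for V^i. Then for every k ≥ 0, the following entrywise inequalities hold: V^k − ∑_{i=0}^{k−1} (∏_{j=i+1}^{k} (1−λ_j)) g⋆ ≤ h⋆ + ∑_{i=0}^{k} (∏_{j=i+1}^{k} (1−λ_j)) λ_i (P^{π_{k−1}} P^{π_{k−2}} ⋯ P^{π_i}) (V^0 − h⋆), and h⋆ + ∑_{i=0}^{k} (∏_{j=i+1}^{k} (1−λ_j)) λ_i ((P^{π⋆})^{k−i}) (V^0 − h⋆) ≤ V^k − ∑_{i=0}^{k−1} (∏_{j=i+1}^{k} (1−λ_j)) g⋆, where an empty matrix product is the identity. -/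

import Mathlib

open Finset Filter

noncomputable section

/-- A finite Markov decision process: a transition kernel `P` assigning to each
state-action pair a probability distribution over states, and a reward `r`. -/
structure FinMDP (S A : Type) [Fintype S] [Fintype A] where
  P : S → A → S → ℝ
  r : S → A → ℝ
  P_nonneg : ∀ s a s', 0 ≤ P s a s'
  P_sum_one : ∀ s a, ∑ s', P s a s' = 1

variable {S A : Type} [Fintype S] [Nonempty S] [Fintype A] [Nonempty A]

/-- The transition operator `P^π` induced by a deterministic policy `π`. -/
def Pop (M : FinMDP S A) (p : S → A) (V : S → ℝ) : S → ℝ :=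
  fun s => ∑ s', M.P s (p s) s' * V s'

/-- The reward vector `r^π` induced by a deterministic policy `π`. -/
def rPol (M : FinMDP S A) (p : S → A) : S → ℝ := fun s => M.r s (p s)

/-- The Bellman optimality operator `T`. -/
def bellman (M : FinMDP S A) (V : S → ℝ) : S → ℝ :=
  fun s => Finset.univ.sup' Finset.univ_nonempty
    (fun a => M.r s a + ∑ s', M.P s a s' * V s')

/-- A deterministic policy `π` is greedy for `V` if `r^π + P^π V = T V`. -/
def IsGreedy (M : FinMDP S A) (p : S → A) (V : S → ℝ) : Prop :=
  rPol M p + Pop M p V = bellman M V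

/-- `(g, h)` is a solution of the modified Bellman equations:
`max_π P^π g = g`, `max_π (r^π + P^π h) = h + g` (entrywise maxima over
deterministic policies, equivalently over actions), and some deterministic
policy attains both maxima simultaneously. -/
def IsMBESolution (M : FinMDP S A) (g h : S → ℝ) : Prop :=
  (∀ s, (Finset.univ.sup' Finset.univ_nonempty
      fun a => ∑ s', M.P s a s' * g s') = g s) ∧
  (∀ s, bellman M h s = h s + g s) ∧
  (∃ p : S → A, Pop M p g = g ∧ rPol M p + Pop M p h = h + g)

/-- The average reward `g^π(s) = liminf_{T→∞} (1/T) ∑_{t<T} ((P^π)^t r^π)(s)`. -/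
def avgReward (M : FinMDP S A) (p : S → A) : S → ℝ :=
  fun s => Filter.liminf
    (fun T : ℕ => (1 / (T : ℝ)) * ∑ t ∈ Finset.range T, ((Pop M p)^[t] (rPol M p)) s)
    Filter.atTop

/-- `prodApply ops j k v = ops (k-1) (ops (k-2) (⋯ (ops j v)))`, the descending
product of operators `ops (k-1), …, ops j` applied to `v`; it is `v` when `k ≤ j`
(the empty product is the identity). -/
def prodApply (ops : ℕ → (S → ℝ) → (S → ℝ)) (j : ℕ) : ℕ → (S → ℝ) → (S → ℝ)
  | 0, v => v
  | k + 1, v => if j ≤ k then ops k (prodApply ops j k v) else v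


lemma Pop_mono (M : FinMDP S A) (p : S → A) {v w : S → ℝ} (hvw : v ≤ w) :
    Pop M p v ≤ Pop M p w := fun s =>
  Finset.sum_le_sum fun s' _ => mul_le_mul_of_nonneg_left (hvw s') (M.P_nonneg _ _ _)

lemma Pop_add (M : FinMDP S A) (p : S → A) (v w : S → ℝ) :
    Pop M p (v + w) = Pop M p v + Pop M p w := by
  funext s
  simp [Pop, mul_add, Finset.sum_add_distrib]

lemma Pop_smul (M : FinMDP S A) (p : S → A) (c : ℝ) (v : S → ℝ) :
    Pop M p (c • v) = c • Pop M p v := by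
  funext s
  simp [Pop, Finset.mul_sum, mul_left_comm]

lemma Pop_sum (M : FinMDP S A) (p : S → A) {ι : Type*} (t : Finset ι) (f : ι → S → ℝ) :
    Pop M p (∑ i ∈ t, f i) = ∑ i ∈ t, Pop M p (f i) := by
  funext s
  simp only [Pop, Finset.sum_apply, Finset.mul_sum]
  exact Finset.sum_comm

lemma rPop_le (M : FinMDP S A) (p : S → A) (v : S → ℝ) :
    rPol M p + Pop M p v ≤ bellman M v := fun s =>
  Finset.le_sup' (fun a => M.r s a + ∑ s', M.P s a s' * v s') (Finset.mem_univ (p s))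

lemma prodApply_succ (ops : ℕ → (S → ℝ) → (S → ℝ)) (j k : ℕ) (v : S → ℝ) :
    prodApply ops j (k+1) v = if j ≤ k then ops k (prodApply ops j k v) else v := rfl

/-- Lemma (Anc-VI sandwich): with the convention `λ_0 = 1`, entrywise bounds on
`V^k − ∑_{i=0}^{k−1} (∏_{j=i+1}^k (1−λ_j)) g⋆` in terms of products of the
greedy transition matrices (upper bound) and powers of `P^{π⋆}` (lower bound)
applied to `V^0 − h⋆`. -/
theorem ancvi_sandwich
    (M : FinMDP S A) (g h : S → ℝ) (hsol : IsMBESolution M g h)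
    (pstar : S → A) (hstar1 : Pop M pstar g = g)
    (hstar2 : rPol M pstar + Pop M pstar h = h + g)
    (lam : ℕ → ℝ) (hlam0 : lam 0 = 1)
    (hlam : ∀ j : ℕ, 1 ≤ j → lam j ∈ Set.Ico (0 : ℝ) 1)
    (V : ℕ → S → ℝ) (pol : ℕ → S → A)
    (hV : ∀ k : ℕ, V (k + 1) = lam (k + 1) • V 0 + (1 - lam (k + 1)) • bellman M (V k))
    (hpol : ∀ i : ℕ, IsGreedy M (pol i) (V i)) :
    ∀ k : ℕ,
      (V k - (∑ i ∈ Finset.range k, ∏ j ∈ Finset.Icc (i + 1) k, (1 - lam j)) • g ≤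
        h + ∑ i ∈ Finset.range (k + 1),
              ((∏ j ∈ Finset.Icc (i + 1) k, (1 - lam j)) * lam i) •
                prodApply (fun l => Pop M (pol l)) i k (V 0 - h)) ∧
      (h + ∑ i ∈ Finset.range (k + 1),
              ((∏ j ∈ Finset.Icc (i + 1) k, (1 - lam j)) * lam i) •
                (Pop M pstar)^[k - i] (V 0 - h) ≤
        V k - (∑ i ∈ Finset.range k, ∏ j ∈ Finset.Icc (i + 1) k, (1 - lam j)) • g) := by
  have hbh : ∀ s, bellman M h s = h s + g s := hsol.2.1
  have hsup : ∀ (p : S → A), Pop M p g ≤ g := by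
    intro p s
    have := hsol.1 s
    calc Pop M p g s ≤ Finset.univ.sup' Finset.univ_nonempty
          (fun a => ∑ s', M.P s a s' * g s') :=
        Finset.le_sup' (fun a => ∑ s', M.P s a s' * g s') (Finset.mem_univ (p s))
      _ = g s := this
  intro k
  induction k with
  | zero =>
      have hIcc : Finset.Icc 1 0 = (∅ : Finset ℕ) := Finset.Icc_eq_empty (by omega)
      constructor
      · intro s
        simp [prodApply, hlam0, hIcc]
      · intro s
        simp [hlam0, hIcc]
  | succ k ih =>
      obtain ⟨ih1, ih2⟩ := ih
      have hpos : (0:ℝ) ≤ 1 - lam (k+1) := by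
        have := (hlam (k+1) (by omega)).2; linarith
      have hcnn : (0:ℝ) ≤ ∑ i ∈ Finset.range k, ∏ j ∈ Finset.Icc (i+1) k, (1 - lam j) := by
        refine Finset.sum_nonneg fun i _ => Finset.prod_nonneg fun j hj => ?_
        have hj1 : 1 ≤ j := le_trans (Nat.succ_le_succ (Nat.zero_le i)) (Finset.mem_Icc.mp hj).1
        have := (hlam j hj1).2; linarith
      have hcrec : ∑ i ∈ Finset.range (k+1), ∏ j ∈ Finset.Icc (i+1) (k+1), (1 - lam j)
          = (1 - lam (k+1)) *
            ((∑ i ∈ Finset.range k, ∏ j ∈ Finset.Icc (i+1) k, (1 - lam j)) + 1) := by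
        rw [Finset.sum_range_succ, Finset.Icc_self, Finset.prod_singleton,
          mul_add, mul_one, Finset.mul_sum]
        congr 1
        refine Finset.sum_congr rfl fun i hi => ?_
        have hik : i < k := Finset.mem_range.mp hi
        rw [Finset.prod_Icc_succ_top (by omega : i + 1 ≤ k + 1)]
        ring
      have hSrec :
          (∑ i ∈ Finset.range (k+1+1), ((∏ j ∈ Finset.Icc (i+1) (k+1), (1 - lam j)) * lam i) •
              prodApply (fun l => Pop M (pol l)) i (k+1) (V 0 - h))
          = lam (k+1) • (V 0 - h) + (1 - lam (k+1)) •
              Pop M (pol k) (∑ i ∈ Finset.range (k+1),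
                ((∏ j ∈ Finset.Icc (i+1) k, (1 - lam j)) * lam i) •
                  prodApply (fun l => Pop M (pol l)) i k (V 0 - h)) := by
        rw [Finset.sum_range_succ]
        have htop : prodApply (fun l => Pop M (pol l)) (k+1) (k+1) (V 0 - h) = V 0 - h := by
          rw [prodApply_succ, if_neg (by omega)]
        have hIcc : Finset.Icc (k+1+1) (k+1) = (∅ : Finset ℕ) := Finset.Icc_eq_empty (by omega)
        rw [htop, hIcc, Finset.prod_empty, one_mul, add_comm]
        congr 1
        rw [Pop_sum, Finset.smul_sum]
        refine Finset.sum_congr rfl fun i hi => ?_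
        have hik : i ≤ k := Nat.lt_succ_iff.mp (Finset.mem_range.mp hi)
        rw [prodApply_succ, if_pos hik, Finset.prod_Icc_succ_top (by omega : i+1 ≤ k+1),
          Pop_smul, smul_smul]
        congr 1
        ring
      have hLrec :
          (∑ i ∈ Finset.range (k+1+1), ((∏ j ∈ Finset.Icc (i+1) (k+1), (1 - lam j)) * lam i) •
              (Pop M pstar)^[k+1-i] (V 0 - h))
          = lam (k+1) • (V 0 - h) + (1 - lam (k+1)) •
              Pop M pstar (∑ i ∈ Finset.range (k+1),
                ((∏ j ∈ Finset.Icc (i+1) k, (1 - lam j)) * lam i) •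
                  (Pop M pstar)^[k-i] (V 0 - h)) := by
        rw [Finset.sum_range_succ]
        have hIcc : Finset.Icc (k+1+1) (k+1) = (∅ : Finset ℕ) := Finset.Icc_eq_empty (by omega)
        rw [hIcc, Finset.prod_empty, one_mul, Nat.sub_self, Function.iterate_zero_apply, add_comm]
        congr 1
        rw [Pop_sum, Finset.smul_sum]
        refine Finset.sum_congr rfl fun i hi => ?_
        have hik : i ≤ k := Nat.lt_succ_iff.mp (Finset.mem_range.mp hi)
        rw [show k+1-i = (k-i)+1 by omega, Function.iterate_succ_apply',
          Finset.prod_Icc_succ_top (by omega : i+1 ≤ k+1), Pop_smul, smul_smul]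
        congr 1
        ring
      set c := ∑ i ∈ Finset.range k, ∏ j ∈ Finset.Icc (i+1) k, (1 - lam j) with hc
      set Sk := ∑ i ∈ Finset.range (k+1),
        ((∏ j ∈ Finset.Icc (i+1) k, (1 - lam j)) * lam i) •
          prodApply (fun l => Pop M (pol l)) i k (V 0 - h) with hSk
      set Lk := ∑ i ∈ Finset.range (k+1),
        ((∏ j ∈ Finset.Icc (i+1) k, (1 - lam j)) * lam i) •
          (Pop M pstar)^[k-i] (V 0 - h) with hLk
      constructor
      · -- upper bound
        have hVle : V k ≤ h + Sk + c • g := by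
          intro s
          have h1 := ih1 s
          simp only [Pi.add_apply, Pi.sub_apply, Pi.smul_apply, smul_eq_mul] at h1 ⊢
          linarith
        have hTle : ∀ s, bellman M (V k) s
            ≤ h s + g s + c * g s + Pop M (pol k) Sk s := by
          intro s
          have hb : bellman M (V k) s = rPol M (pol k) s + Pop M (pol k) (V k) s := by
            rw [← hpol k]; rfl
          have h1 : Pop M (pol k) (V k) s ≤ Pop M (pol k) (h + Sk + c • g) s :=
            Pop_mono M (pol k) hVle s
          have h2 : Pop M (pol k) (h + Sk + c • g) s
              = Pop M (pol k) h s + Pop M (pol k) Sk s + c * Pop M (pol k) g s := by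
            rw [Pop_add, Pop_add, Pop_smul]
            simp [Pi.add_apply]
          have h3 : rPol M (pol k) s + Pop M (pol k) h s ≤ bellman M h s :=
            rPop_le M (pol k) h s
          have h4 := hbh s
          have h5 : Pop M (pol k) g s ≤ g s := hsup (pol k) s
          nlinarith [mul_le_mul_of_nonneg_left h5 hcnn]
        rw [hV k, hcrec, hSrec]
        intro s
        have h1 := hTle s
        simp only [Pi.add_apply, Pi.sub_apply, Pi.smul_apply, smul_eq_mul]
        nlinarith [mul_le_mul_of_nonneg_left h1 hpos]
      · -- lower bound
        have hVge : h + Lk + c • g ≤ V k := by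
          intro s
          have h1 := ih2 s
          simp only [Pi.add_apply, Pi.sub_apply, Pi.smul_apply, smul_eq_mul] at h1 ⊢
          linarith
        have hTge : ∀ s, h s + g s + c * g s + Pop M pstar Lk s ≤ bellman M (V k) s := by
          intro s
          have h1 : Pop M pstar (h + Lk + c • g) s ≤ Pop M pstar (V k) s :=
            Pop_mono M pstar hVge s
          have h2 : Pop M pstar (h + Lk + c • g) s
              = Pop M pstar h s + Pop M pstar Lk s + c * g s := by
            rw [Pop_add, Pop_add, Pop_smul, hstar1]
            simp [Pi.add_apply]
          have h3 : rPol M pstar s + Pop M pstar (V k) s ≤ bellman M (V k) s :=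
            rPop_le M pstar (V k) s
          have h4 : rPol M pstar s + Pop M pstar h s = h s + g s := by
            have := congrFun hstar2 s
            simpa using this
          linarith
        rw [hV k, hcrec, hLrec]
        intro s
        have h1 := hTge s
        simp only [Pi.add_apply, Pi.sub_apply, Pi.smul_apply, smul_eq_mul]
        nlinarith [mul_le_mul_of_nonneg_left h1 hpos]
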